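/- arXiv:cs/0109006 — 2 statements merged into one kernel-verified Lean document; each statement's English description precedes it below -/
import Mathlib

section
/- Minimal answer sets of update sequences satisfy the following: S is a minimal update answer set of P⃗_◁ iff the minimality-test program P⃗^{min}_S has no answer set, where P⃗^{min}_S augments P⃗_◁ with constraints ← rej(r), not s_r for each rejection atom, rules ok ← not rej(r) and facts s_r ← for each rej(r) ∈ S, and the constraint ← not ok. -/
/-- A literal over atoms `α`: an atom or a strongly negated atom. -/
inductive Lit (α : Type) where
  | pos : α → Lit α
  | neg : α → Lit α

/-- The complementary literal. -/
def Lit.compl {α : Type} : Lit α → Lit α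
  | .pos a => .neg a
  | .neg a => .pos a

/-- A rule of an extended logic program: optional head literal,
prerequisites `prem`, and weakly negated body literals `nbody`. -/
structure Rule (α : Type) where
  head : Option (Lit α)
  prem : Set (Lit α)
  nbody : Set (Lit α)

/-- A set of literals is consistent iff it contains no complementary pair. -/
def Consistent {α : Type} (S : Set (Lit α)) : Prop :=
  ∀ a : α, ¬ (Lit.pos a ∈ S ∧ Lit.neg a ∈ S)

/-- The body of `r` is true in `S`. -/
def BodyTrue {α : Type} (S : Set (Lit α)) (r : Rule α) : Prop :=
  r.prem ⊆ S ∧ ∀ L ∈ r.nbody, L ∉ S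

/-- The head of `r` is true in `S` (false for constraints). -/
def HeadTrue {α : Type} (S : Set (Lit α)) (r : Rule α) : Prop :=
  ∃ L, r.head = some L ∧ L ∈ S

/-- Rule `r` is true in `S`. -/
def RuleTrue {α : Type} (S : Set (Lit α)) (r : Rule α) : Prop :=
  BodyTrue S r → HeadTrue S r

/-- `S` is a model of program `P`. -/
def IsModel {α : Type} (S : Set (Lit α)) (P : Set (Rule α)) : Prop :=
  ∀ r ∈ P, RuleTrue S r

/-- `r` is defeated by `S`. -/
def Defeated {α : Type} (S : Set (Lit α)) (r : Rule α) : Prop :=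
  ∃ L ∈ r.nbody, L ∈ S

/-- The Gelfond–Lifschitz reduct of `P` relative to `S`. -/
def Reduct {α : Type} (P : Set (Rule α)) (S : Set (Lit α)) : Set (Rule α) :=
  { r' | ∃ r ∈ P, ¬ Defeated S r ∧ r' = Rule.mk r.head r.prem ∅ }

/-- `S` is an answer set of `P`: a consistent set of literals that is a
minimal model of the reduct `P^S`. -/
def IsAnswerSet {α : Type} (P : Set (Rule α)) (S : Set (Lit α)) : Prop :=
  Consistent S ∧ IsModel S (Reduct P S) ∧
    ∀ T ⊆ S, IsModel T (Reduct P S) → T = S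

/-- The belief set of `P`: all rules true in every answer set of `P`. -/
def Bel {α : Type} (P : Set (Rule α)) : Set (Rule α) :=
  { r | ∀ S, IsAnswerSet P S → RuleTrue S r }
/-- Extended alphabet `At*`: original atoms, indexed copies `A_i`,
and rejection atoms `rej(r)` for (named copies of) rules. -/
inductive ExtAtom (α : Type) where
  | base : α → ExtAtom α
  | idx : ℕ → α → ExtAtom α
  | rej : ℕ → Rule α → ExtAtom α

/-- Lift a literal over `α` to the corresponding literal over `At*`. -/
def liftLit {α : Type} : Lit α → Lit (ExtAtom α)
  | .pos a => .pos (.base a)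
  | .neg a => .neg (.base a)

/-- The indexed copy `L_i` of a literal `L`. -/
def idxLit {α : Type} (i : ℕ) : Lit α → Lit (ExtAtom α)
  | .pos a => .pos (.idx i a)
  | .neg a => .neg (.idx i a)

/-- Literal `L` occurs in the update sequence `(P 0, …, P (n-1))`. -/
def OccursIn {α : Type} (n : ℕ) (P : ℕ → Set (Rule α)) (L : Lit α) : Prop :=
  ∃ i < n, ∃ r ∈ P i, r.head = some L ∨ L ∈ r.prem ∨ L ∈ r.nbody

/-- The update program `P_◁` of the update sequence `(P 0, …, P (n-1))`,
an ELP over the extended alphabet `At*`. -/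
def UpdProgram {α : Type} (n : ℕ) (P : ℕ → Set (Rule α)) : Set (Rule (ExtAtom α)) :=
  -- (i) all constraints
  { r' | ∃ i < n, ∃ r ∈ P i, r.head = none ∧
      r' = Rule.mk none (liftLit '' r.prem) (liftLit '' r.nbody) } ∪
  -- (ii)  L_i ← B(r), not rej(r)
  { r' | ∃ i < n, ∃ r ∈ P i, ∃ L, r.head = some L ∧
      r' = Rule.mk (some (idxLit i L)) (liftLit '' r.prem)
             ((liftLit '' r.nbody) ∪ {Lit.pos (ExtAtom.rej i r)}) } ∪
  -- (iii)  rej(r) ← B(r), ¬L_{i+1}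
  { r' | ∃ i, i + 1 < n ∧ ∃ r ∈ P i, ∃ L, r.head = some L ∧
      r' = Rule.mk (some (Lit.pos (ExtAtom.rej i r)))
             ((liftLit '' r.prem) ∪ {idxLit (i+1) L.compl}) (liftLit '' r.nbody) } ∪
  -- (iv) inertia rules  L_i ← L_{i+1}  and  L ← L_1
  { r' | ∃ L, OccursIn n P L ∧
      ((∃ i, i + 1 < n ∧ r' = Rule.mk (some (idxLit i L)) {idxLit (i+1) L} ∅) ∨
        r' = Rule.mk (some (liftLit L)) {idxLit 0 L} ∅) }

/-- `S` is an update answer set of the sequence `(P 0, …, P (n-1))`: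
the restriction to `Lit_At` of an answer set of the update program. -/
def UpdateAnswerSet {α : Type} (n : ℕ) (P : ℕ → Set (Rule α)) (S : Set (Lit α)) : Prop :=
  ∃ S' : Set (Lit (ExtAtom α)), IsAnswerSet (UpdProgram n P) S' ∧
    S = { L | liftLit L ∈ S' }

/-- Two rules are conflicting iff their heads are complementary literals. -/
def Conflicting {α : Type} (r r' : Rule α) : Prop :=
  ∃ L, r.head = some L ∧ r'.head = some L.compl

/-- The founded rejection set at level `i`: rules of `P i` rejected by a
conflicting, itself non-rejected rule of some later program. -/
def RejLevel {α : Type} (n : ℕ) (P : ℕ → Set (Rule α)) (S : Set (Lit α)) (i : ℕ) :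
    Set (Rule α) :=
  { r | r ∈ P i ∧ ∃ j, ∃ _ : i < j, ∃ _ : j < n, ∃ r',
      r' ∈ P j ∧ r' ∉ RejLevel n P S j ∧
      Conflicting r r' ∧ BodyTrue S r ∧ BodyTrue S r' }
  termination_by n - i
  decreasing_by omega

/-- The founded rejection set `Rej(S, P⃗)`. -/
def Rej {α : Type} (n : ℕ) (P : ℕ → Set (Rule α)) (S : Set (Lit α)) : Set (Rule α) :=
  { r | ∃ i < n, r ∈ RejLevel n P S i }

/-- The union `∪P⃗` of all rules of the sequence. -/
def UnionSeq {α : Type} (n : ℕ) (P : ℕ → Set (Rule α)) : Set (Rule α) :=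
  { r | ∃ i < n, r ∈ P i }

/-- Alphabet of the minimality-test program: `At*` extended by `ok` and by
atoms `s_r` for each rejection atom. -/
inductive TAtom (α : Type) where
  | orig : ExtAtom α → TAtom α
  | ok : TAtom α
  | s : ℕ → Rule α → TAtom α

/-- Lift a literal over `At*` to the test alphabet. -/
def liftT {α : Type} : Lit (ExtAtom α) → Lit (TAtom α)
  | .pos a => .pos (.orig a)
  | .neg a => .neg (.orig a)

/-- Lift a rule over `At*` to the test alphabet. -/
def liftTRule {α : Type} (r : Rule (ExtAtom α)) : Rule (TAtom α) :=
  Rule.mk (r.head.map liftT) (liftT '' r.prem) (liftT '' r.nbody)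

/-- The minimality-test program `P⃗^{min}_S`: all rules of `P⃗_◁` together
with (i) constraints `← rej(r), not s_r`; (ii) for each `rej(r) ∈ S`, the
rule `ok ← not rej(r)` and the fact `s_r ←`; (iii) the constraint `← not ok`. -/
def MinTest {α : Type} (n : ℕ) (P : ℕ → Set (Rule α))
    (S : Set (Lit (ExtAtom α))) : Set (Rule (TAtom α)) :=
  (liftTRule '' UpdProgram n P) ∪
  { r' | ∃ i < n, ∃ r ∈ P i,
      r' = Rule.mk none {Lit.pos (TAtom.orig (ExtAtom.rej i r))}
             {Lit.pos (TAtom.s i r)} } ∪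
  { r' | ∃ i < n, ∃ r ∈ P i, Lit.pos (ExtAtom.rej i r) ∈ S ∧
      (r' = Rule.mk (some (Lit.pos TAtom.ok)) ∅
              {Lit.pos (TAtom.orig (ExtAtom.rej i r))} ∨
       r' = Rule.mk (some (Lit.pos (TAtom.s i r))) ∅ ∅) } ∪
  {Rule.mk none ∅ {Lit.pos TAtom.ok}}

/-- `S` is a minimal update answer set: no update answer set rejects a
strictly smaller set of rules. -/
def MinimalUAS {α : Type} (n : ℕ) (P : ℕ → Set (Rule α)) (S : Set (Lit α)) : Prop :=
  UpdateAnswerSet n P S ∧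
    ∀ S', UpdateAnswerSet n P S' → ¬ (Rej n P S' ⊂ Rej n P S)

section Generic
variable {β : Type} {Q : Set (Rule β)} {X : Set (Lit β)}

theorem as_closure (h : IsAnswerSet Q X) {r : Rule β} (hr : r ∈ Q)
    (hnd : ¬ Defeated X r) (hp : r.prem ⊆ X) {L : Lit β} (hh : r.head = some L) :
    L ∈ X := by
  have hmem : Rule.mk r.head r.prem ∅ ∈ Reduct Q X := ⟨r, hr, hnd, rfl⟩
  have := h.2.1 _ hmem ⟨hp, by intro L hL; exact absurd hL (Set.notMem_empty L)⟩
  obtain ⟨L', hL', hmemL⟩ := this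
  simp only [hh] at hL'
  cases hL'; exact hmemL

theorem as_nohead (h : IsAnswerSet Q X) {r : Rule β} (hr : r ∈ Q)
    (hnd : ¬ Defeated X r) (hh : r.head = none) : ¬ r.prem ⊆ X := by
  intro hp
  have hmem : Rule.mk r.head r.prem ∅ ∈ Reduct Q X := ⟨r, hr, hnd, rfl⟩
  have := h.2.1 _ hmem ⟨hp, by intro L hL; exact absurd hL (Set.notMem_empty L)⟩
  obtain ⟨L', hL', _⟩ := this
  simp [hh] at hL'

theorem as_supported (h : IsAnswerSet Q X) {x : Lit β} (hx : x ∈ X) :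
    ∃ r ∈ Q, ¬ Defeated X r ∧ r.head = some x ∧ r.prem ⊆ X := by
  classical
  set T : Set (Lit β) :=
    {y ∈ X | ∃ r ∈ Q, ¬ Defeated X r ∧ r.head = some y ∧ r.prem ⊆ X} with hT
  have hTsub : T ⊆ X := fun y hy => hy.1
  have hTmod : IsModel T (Reduct Q X) := by
    rintro r' ⟨r, hr, hnd, rfl⟩
    rintro ⟨hp, -⟩
    have hpX : r.prem ⊆ X := fun z hz => hTsub (hp hz)
    cases hhead : r.head with
    | none => exact absurd hpX (as_nohead h hr hnd hhead)
    | some L =>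
      refine ⟨L, ?_, ?_⟩
      · rfl
      · exact ⟨as_closure h hr hnd hpX hhead, r, hr, hnd, hhead, hpX⟩
  have := h.2.2 T hTsub hTmod
  rw [← this] at hx
  exact hx.2

end Generic
section Ext
variable {α : Type}

theorem liftLit_inj {L M : Lit α} (h : liftLit L = liftLit M) : L = M := by
  cases L <;> cases M <;> simp_all [liftLit]

theorem idxLit_inj {i k : ℕ} {L M : Lit α} (h : idxLit i L = idxLit k M) :
    i = k ∧ L = M := by
  cases L <;> cases M <;> simp_all [idxLit]

theorem idxLit_ne_liftLit {i : ℕ} {L M : Lit α} : idxLit i L ≠ liftLit M := by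
  cases L <;> cases M <;> simp [idxLit, liftLit]

theorem idxLit_ne_rej {i k : ℕ} {L : Lit α} {r : Rule α} :
    idxLit i L ≠ Lit.pos (ExtAtom.rej k r) := by
  cases L <;> simp [idxLit]

theorem liftLit_ne_rej {k : ℕ} {L : Lit α} {r : Rule α} :
    liftLit L ≠ Lit.pos (ExtAtom.rej k r) := by
  cases L <;> simp [liftLit]

/-- restriction of a set over the extended alphabet to the base alphabet -/
def restr (X : Set (Lit (ExtAtom α))) : Set (Lit α) := {L | liftLit L ∈ X}

variable {n : ℕ} {P : ℕ → Set (Rule α)}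

theorem mem_U_i {i : ℕ} (hi : i < n) {r : Rule α} (hr : r ∈ P i) (hh : r.head = none) :
    Rule.mk none (liftLit '' r.prem) (liftLit '' r.nbody) ∈ UpdProgram n P :=
  Or.inl (Or.inl (Or.inl ⟨i, hi, r, hr, hh, rfl⟩))

theorem mem_U_ii {i : ℕ} (hi : i < n) {r : Rule α} (hr : r ∈ P i) {L : Lit α}
    (hh : r.head = some L) :
    Rule.mk (some (idxLit i L)) (liftLit '' r.prem)
      ((liftLit '' r.nbody) ∪ {Lit.pos (ExtAtom.rej i r)}) ∈ UpdProgram n P :=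
  Or.inl (Or.inl (Or.inr ⟨i, hi, r, hr, L, hh, rfl⟩))

theorem mem_U_iii {i : ℕ} (hi : i + 1 < n) {r : Rule α} (hr : r ∈ P i) {L : Lit α}
    (hh : r.head = some L) :
    Rule.mk (some (Lit.pos (ExtAtom.rej i r)))
      ((liftLit '' r.prem) ∪ {idxLit (i+1) L.compl}) (liftLit '' r.nbody) ∈ UpdProgram n P :=
  Or.inl (Or.inr ⟨i, hi, r, hr, L, hh, rfl⟩)

theorem mem_U_iv {L : Lit α} (hL : OccursIn n P L) {i : ℕ} (hi : i + 1 < n) :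
    Rule.mk (some (idxLit i L)) {idxLit (i+1) L} ∅ ∈ UpdProgram n P :=
  Or.inr ⟨L, hL, Or.inl ⟨i, hi, rfl⟩⟩

theorem mem_U_iv' {L : Lit α} (hL : OccursIn n P L) :
    Rule.mk (some (liftLit L)) {idxLit 0 L} ∅ ∈ UpdProgram n P :=
  Or.inr ⟨L, hL, Or.inr rfl⟩

variable {X : Set (Lit (ExtAtom α))}

/-- translation of body conditions -/
theorem bodyTrue_restr {r : Rule α}
    (hp : liftLit '' r.prem ⊆ X) (hn : ∀ B ∈ r.nbody, liftLit B ∉ X) :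
    BodyTrue (restr X) r :=
  ⟨fun z hz => hp ⟨z, hz, rfl⟩, hn⟩

theorem not_defeated_ii {i : ℕ} {r : Rule α} {L : Lit α}
    (hb : BodyTrue (restr X) r) (hrej : Lit.pos (ExtAtom.rej i r) ∉ X) :
    ¬ Defeated X (Rule.mk (some (idxLit i L)) (liftLit '' r.prem)
      ((liftLit '' r.nbody) ∪ {Lit.pos (ExtAtom.rej i r)})) := by
  rintro ⟨B, hB, hBX⟩
  rcases hB with ⟨b, hb', rfl⟩ | hB
  · exact hb.2 b hb' hBX
  · rw [Set.mem_singleton_iff] at hB; subst hB; exact hrej hBX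

theorem not_defeated_iii {r : Rule α} {h : Option (Lit (ExtAtom α))}
    {pr : Set (Lit (ExtAtom α))} (hb : BodyTrue (restr X) r) :
    ¬ Defeated X (Rule.mk h pr (liftLit '' r.nbody)) := by
  rintro ⟨B, ⟨b, hb', rfl⟩, hBX⟩
  exact hb.2 b hb' hBX

end Ext
section Char
variable {α : Type} {n : ℕ} {P : ℕ → Set (Rule α)} {X : Set (Lit (ExtAtom α))}

theorem rej_mem_iff (hX : IsAnswerSet (UpdProgram n P) X) {i : ℕ} {r : Rule α} :
    Lit.pos (ExtAtom.rej i r) ∈ X ↔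
      i + 1 < n ∧ r ∈ P i ∧ ∃ L, r.head = some L ∧ BodyTrue (restr X) r ∧
        idxLit (i+1) L.compl ∈ X := by
  constructor
  · intro hx
    obtain ⟨rr, hrU, hnd, hhead, hprem⟩ := as_supported hX hx
    rcases hrU with ((h1 | h2) | h3) | h4
    · obtain ⟨i', hi', r', hr', hh', rfl⟩ := h1
      simp at hhead
    · obtain ⟨i', hi', r', hr', L', hh', rfl⟩ := h2
      exact absurd (Option.some.inj hhead) idxLit_ne_rej
    · obtain ⟨i', hi', r', hr', L', hh', rfl⟩ := h3
      obtain ⟨rfl, rfl⟩ : i' = i ∧ r' = r := by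
        simpa using Option.some.inj hhead
      refine ⟨hi', hr', L', hh', ?_, hprem (Or.inr rfl)⟩
      exact bodyTrue_restr (fun z hz => hprem (Or.inl hz))
        (fun B hB hBX => hnd ⟨liftLit B, ⟨B, hB, rfl⟩, hBX⟩)
    · obtain ⟨L, hocc, ⟨i', hi', rfl⟩ | rfl⟩ := h4
      · exact absurd (Option.some.inj hhead) idxLit_ne_rej
      · exact absurd (Option.some.inj hhead) liftLit_ne_rej
  · rintro ⟨hi, hr, L, hh, hbt, hidx⟩
    refine as_closure hX (mem_U_iii hi hr hh) (not_defeated_iii hbt) ?_ rfl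
    rintro z (⟨b, hb, rfl⟩ | hz)
    · exact hbt.1 hb
    · rw [Set.mem_singleton_iff] at hz; subst hz; exact hidx

theorem idx_supported (hX : IsAnswerSet (UpdProgram n P) X) {k : ℕ} {M : Lit α}
    (hx : idxLit k M ∈ X) :
    (k < n ∧ ∃ r ∈ P k, r.head = some M ∧ BodyTrue (restr X) r ∧
        Lit.pos (ExtAtom.rej k r) ∉ X)
    ∨ (k + 1 < n ∧ OccursIn n P M ∧ idxLit (k+1) M ∈ X) := by
  obtain ⟨rr, hrU, hnd, hhead, hprem⟩ := as_supported hX hx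
  rcases hrU with ((h1 | h2) | h3) | h4
  · obtain ⟨i', hi', r', hr', hh', rfl⟩ := h1
    simp at hhead
  · obtain ⟨i', hi', r', hr', L', hh', rfl⟩ := h2
    obtain ⟨rfl, rfl⟩ := idxLit_inj (Option.some.inj hhead)
    left
    refine ⟨hi', r', hr', hh', ?_, fun hrej => hnd ⟨_, Or.inr rfl, hrej⟩⟩
    exact bodyTrue_restr hprem (fun B hB hBX => hnd ⟨liftLit B, Or.inl ⟨B, hB, rfl⟩, hBX⟩)
  · obtain ⟨i', hi', r', hr', L', hh', rfl⟩ := h3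
    exact absurd (Option.some.inj hhead).symm idxLit_ne_rej
  · obtain ⟨L, hocc, ⟨i', hi', rfl⟩ | rfl⟩ := h4
    · obtain ⟨rfl, rfl⟩ := idxLit_inj (Option.some.inj hhead)
      right
      exact ⟨hi', hocc, hprem rfl⟩
    · exact absurd (Option.some.inj hhead).symm idxLit_ne_liftLit

theorem idx_char (hX : IsAnswerSet (UpdProgram n P) X) :
    ∀ d k, n - k ≤ d → ∀ M : Lit α,
      (idxLit k M ∈ X ↔ ∃ j, k ≤ j ∧ j < n ∧ ∃ r' ∈ P j, r'.head = some M ∧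
        BodyTrue (restr X) r' ∧ Lit.pos (ExtAtom.rej j r') ∉ X) := by
  intro d
  induction d with
  | zero =>
    intro k hk M
    have hkn : n ≤ k := by omega
    constructor
    · intro hx
      rcases idx_supported hX hx with ⟨hlt, _⟩ | ⟨hlt, _⟩ <;> omega
    · rintro ⟨j, hkj, hjn, _⟩; omega
  | succ d ih =>
    intro k hk M
    constructor
    · intro hx
      rcases idx_supported hX hx with ⟨hlt, r, hr, hh, hbt, hrej⟩ | ⟨hlt, hocc, hx'⟩
      · exact ⟨k, le_refl k, hlt, r, hr, hh, hbt, hrej⟩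
      · obtain ⟨j, hj1, hjn, rest⟩ := (ih (k+1) (by omega) M).1 hx'
        exact ⟨j, by omega, hjn, rest⟩
    · rintro ⟨j, hkj, hjn, r', hr', hh, hbt, hrej⟩
      rcases eq_or_lt_of_le hkj with rfl | hlt
      · -- provider at k
        refine as_closure hX (mem_U_ii hjn hr' hh) (not_defeated_ii hbt hrej) ?_ rfl
        rintro z ⟨b, hb, rfl⟩
        exact hbt.1 hb
      · -- via inertia from k+1
        have hx' : idxLit (k+1) M ∈ X :=
          (ih (k+1) (by omega) M).2 ⟨j, by omega, hjn, r', hr', hh, hbt, hrej⟩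
        have hocc : OccursIn n P M := ⟨j, hjn, r', hr', Or.inl hh⟩
        refine as_closure hX (mem_U_iv hocc (show k+1 < n by omega)) ?_ ?_ rfl
        · rintro ⟨B, hB, _⟩; exact absurd hB (Set.notMem_empty B)
        · intro z hz; rw [Set.mem_singleton_iff] at hz; subst hz; exact hx'

end Char
section RejChar
variable {α : Type} {n : ℕ} {P : ℕ → Set (Rule α)} {X : Set (Lit (ExtAtom α))}

theorem rej_char (hX : IsAnswerSet (UpdProgram n P) X) :
    ∀ d i, n - i ≤ d → ∀ r : Rule α,
      (Lit.pos (ExtAtom.rej i r) ∈ X ↔ r ∈ RejLevel n P (restr X) i) := by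
  intro d
  induction d with
  | zero =>
    intro i hi r
    rw [RejLevel]
    constructor
    · intro hx; have := ((rej_mem_iff hX).1 hx).1; omega
    · rintro ⟨-, j, hij, hjn, -⟩; omega
  | succ d ih =>
    intro i hi r
    rw [RejLevel, rej_mem_iff hX]
    constructor
    · rintro ⟨hin, hrP, L, hh, hbt, hidx⟩
      obtain ⟨j, hij, hjn, r', hr', hh', hbt', hrej'⟩ :=
        (idx_char hX n (i+1) (by omega) L.compl).1 hidx
      refine ⟨hrP, j, by omega, hjn, r', hr', ?_, ⟨L, hh, hh'⟩, hbt, hbt'⟩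
      rw [← ih j (by omega) r']
      exact hrej'
    · rintro ⟨hrP, j, hij, hjn, r', hr', hnotrej, ⟨L, hh, hh'⟩, hbt, hbt'⟩
      refine ⟨by omega, hrP, L, hh, hbt, ?_⟩
      apply (idx_char hX n (i+1) (by omega) L.compl).2
      exact ⟨j, by omega, hjn, r', hr', hh', hbt',
        by rw [ih j (by omega) r']; exact hnotrej⟩

theorem idx_zero (hX : IsAnswerSet (UpdProgram n P) X) {M : Lit α}
    (hocc : OccursIn n P M) :
    ∀ k, k < n → idxLit k M ∈ X → idxLit 0 M ∈ X := by
  intro k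
  induction k with
  | zero => exact fun _ h => h
  | succ k ihk =>
    intro hk hx
    have hkx : idxLit k M ∈ X := by
      refine as_closure hX (mem_U_iv hocc hk) ?_ ?_ rfl
      · rintro ⟨B, hB, -⟩; exact absurd hB (Set.notMem_empty B)
      · intro z hz; rw [Set.mem_singleton_iff] at hz; subst hz; exact hx
    exact ihk (by omega) hkx

theorem all_or_none (hX : IsAnswerSet (UpdProgram n P) X) {i₀ i : ℕ} {r : Rule α}
    (h0 : Lit.pos (ExtAtom.rej i₀ r) ∈ X) (hi : r ∈ P i) (hin : i < n) :
    Lit.pos (ExtAtom.rej i r) ∈ X := by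
  by_contra hno
  obtain ⟨hi0n, hrP0, L, hh, hbt, hidx⟩ := (rej_mem_iff hX).1 h0
  obtain ⟨j, -, hjn, r', hr', hh', -, -⟩ :=
    (idx_char hX n (i₀+1) (by omega) L.compl).1 hidx
  have hoccC : OccursIn n P L.compl := ⟨j, hjn, r', hr', Or.inl hh'⟩
  have hoccL : OccursIn n P L := ⟨i, hin, r, hi, Or.inl hh⟩
  have hfire : idxLit i L ∈ X := by
    refine as_closure hX (mem_U_ii hin hi hh) (not_defeated_ii hbt hno) ?_ rfl
    rintro z ⟨b, hb, rfl⟩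
    exact hbt.1 hb
  have h1 : idxLit 0 L ∈ X := idx_zero hX hoccL i hin hfire
  have h2 : idxLit 0 L.compl ∈ X := idx_zero hX hoccC (i₀+1) (by omega) hidx
  cases L with
  | pos a =>
    simp only [idxLit, Lit.compl] at h1 h2
    exact hX.1 (ExtAtom.idx 0 a) ⟨h1, h2⟩
  | neg a =>
    simp only [idxLit, Lit.compl] at h1 h2
    exact hX.1 (ExtAtom.idx 0 a) ⟨h2, h1⟩

theorem Rej_restr_eq (hX : IsAnswerSet (UpdProgram n P) X) :
    Rej n P (restr X) = {r | ∃ i, Lit.pos (ExtAtom.rej i r) ∈ X} := by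
  ext r
  constructor
  · rintro ⟨i, hin, hmem⟩
    exact ⟨i, (rej_char hX n i (by omega) r).2 hmem⟩
  · rintro ⟨i, hx⟩
    have hin : i + 1 < n := ((rej_mem_iff hX).1 hx).1
    exact ⟨i, by omega, (rej_char hX n i (by omega) r).1 hx⟩

theorem strict_iff {S : Set (Lit (ExtAtom α))} (hX : IsAnswerSet (UpdProgram n P) X)
    (hS : IsAnswerSet (UpdProgram n P) S) :
    Rej n P (restr X) ⊂ Rej n P (restr S) ↔
      {p : ℕ × Rule α | Lit.pos (ExtAtom.rej p.1 p.2) ∈ X} ⊂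
      {p : ℕ × Rule α | Lit.pos (ExtAtom.rej p.1 p.2) ∈ S} := by
  rw [Rej_restr_eq hX, Rej_restr_eq hS, Set.ssubset_def, Set.ssubset_def]
  constructor
  · rintro ⟨hsub, hns⟩
    constructor
    · rintro ⟨i, r⟩ hx
      obtain ⟨i₀, hi₀⟩ := hsub ⟨i, hx⟩
      obtain ⟨hin, hrP, -⟩ := (rej_mem_iff hX).1 hx
      exact all_or_none hS hi₀ hrP (by omega)
    · intro hsup
      apply hns
      rintro r ⟨i, hx⟩
      have h' : (i, r) ∈ {p : ℕ × Rule α | Lit.pos (ExtAtom.rej p.1 p.2) ∈ S} := hx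
      exact ⟨i, hsup h'⟩
  · rintro ⟨hsub, hns⟩
    constructor
    · rintro r ⟨i, hx⟩
      have h' : (i, r) ∈ {p : ℕ × Rule α | Lit.pos (ExtAtom.rej p.1 p.2) ∈ X} := hx
      exact ⟨i, hsub h'⟩
    · intro hsup
      apply hns
      rintro ⟨i, r⟩ hx
      obtain ⟨i₀, hi₀X⟩ := hsup ⟨i, hx⟩
      obtain ⟨hin, hrP, -⟩ := (rej_mem_iff hS).1 hx
      exact all_or_none hX hi₀X hrP (by omega)

end RejChar
section TTest
variable {α : Type}

theorem liftT_inj {l m : Lit (ExtAtom α)} (h : liftT l = liftT m) : l = m := by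
  cases l <;> cases m <;> simp_all [liftT]

theorem liftT_mem_range {l : Lit (ExtAtom α)} :
    liftT l ∈ Set.range (liftT : Lit (ExtAtom α) → Lit (TAtom α)) := ⟨l, rfl⟩

theorem ok_not_range : Lit.pos TAtom.ok ∉
    Set.range (liftT : Lit (ExtAtom α) → Lit (TAtom α)) := by
  rintro ⟨l, hl⟩; cases l <;> simp [liftT] at hl

theorem s_not_range {i : ℕ} {r : Rule α} : Lit.pos (TAtom.s i r) ∉
    Set.range (liftT : Lit (ExtAtom α) → Lit (TAtom α)) := by
  rintro ⟨l, hl⟩; cases l <;> simp [liftT] at hl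

theorem liftT_ne_ok {l : Lit (ExtAtom α)} : liftT l ≠ Lit.pos TAtom.ok := by
  cases l <;> simp [liftT]

theorem liftT_ne_s {l : Lit (ExtAtom α)} {i : ℕ} {r : Rule α} :
    liftT l ≠ Lit.pos (TAtom.s i r) := by
  cases l <;> simp [liftT]

theorem defeated_liftT {T : Set (Lit (TAtom α))} {u : Rule (ExtAtom α)} :
    Defeated T (liftTRule u) ↔ Defeated {l | liftT l ∈ T} u := by
  constructor
  · rintro ⟨B, hB, hBT⟩
    obtain ⟨b, hb, rfl⟩ := hB
    exact ⟨b, hb, hBT⟩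
  · rintro ⟨b, hb, hbT⟩
    exact ⟨liftT b, ⟨b, hb, rfl⟩, hbT⟩

variable {n : ℕ} {P : ℕ → Set (Rule α)} {S : Set (Lit (ExtAtom α))}

theorem mem_V_lift {u : Rule (ExtAtom α)} (hu : u ∈ UpdProgram n P) :
    liftTRule u ∈ MinTest n P S := Or.inl (Or.inl (Or.inl ⟨u, hu, rfl⟩))

theorem mem_V_c2 {i : ℕ} (hi : i < n) {r : Rule α} (hr : r ∈ P i) :
    Rule.mk none {Lit.pos (TAtom.orig (ExtAtom.rej i r))} {Lit.pos (TAtom.s i r)}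
      ∈ MinTest n P S := Or.inl (Or.inl (Or.inr ⟨i, hi, r, hr, rfl⟩))

theorem mem_V_ok {i : ℕ} (hi : i < n) {r : Rule α} (hr : r ∈ P i)
    (hrS : Lit.pos (ExtAtom.rej i r) ∈ S) :
    Rule.mk (some (Lit.pos TAtom.ok)) ∅ {Lit.pos (TAtom.orig (ExtAtom.rej i r))}
      ∈ MinTest n P S := Or.inl (Or.inr ⟨i, hi, r, hr, hrS, Or.inl rfl⟩)

theorem mem_V_s {i : ℕ} (hi : i < n) {r : Rule α} (hr : r ∈ P i)
    (hrS : Lit.pos (ExtAtom.rej i r) ∈ S) :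
    Rule.mk (some (Lit.pos (TAtom.s i r))) ∅ ∅ ∈ MinTest n P S :=
  Or.inl (Or.inr ⟨i, hi, r, hr, hrS, Or.inr rfl⟩)

theorem mem_V_fin :
    Rule.mk none ∅ {Lit.pos TAtom.ok} ∈ MinTest n P S := Or.inr rfl

variable {T : Set (Lit (TAtom α))}

theorem ok_mem (hT : IsAnswerSet (MinTest n P S) T) : Lit.pos TAtom.ok ∈ T := by
  by_contra hok
  refine as_nohead hT (mem_V_fin) ?_ rfl (Set.empty_subset T)
  rintro ⟨B, hB, hBT⟩
  rw [Set.mem_singleton_iff] at hB; subst hB; exact hok hBT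

theorem ok_support (hT : IsAnswerSet (MinTest n P S) T) :
    ∃ i < n, ∃ r ∈ P i, Lit.pos (ExtAtom.rej i r) ∈ S ∧
      Lit.pos (TAtom.orig (ExtAtom.rej i r)) ∉ T := by
  obtain ⟨v, hvV, hnd, hhead, hprem⟩ := as_supported hT (ok_mem hT)
  rcases hvV with ((hl | hc2) | hc3) | hfin
  · obtain ⟨u, huU, rfl⟩ := hl
    cases hu : u.head with
    | none => simp [liftTRule, hu] at hhead
    | some l =>
      simp only [liftTRule, hu, Option.map_some] at hhead
      exact absurd (Option.some.inj hhead) liftT_ne_ok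
  · obtain ⟨i, hi, r, hr, rfl⟩ := hc2
    simp at hhead
  · obtain ⟨i, hi, r, hr, hrS, rfl | rfl⟩ := hc3
    · refine ⟨i, hi, r, hr, hrS, fun hmem => hnd ⟨_, rfl, hmem⟩⟩
    · simp at hhead
  · rw [Set.mem_singleton_iff] at hfin; subst hfin; simp at hhead

theorem s_support (hT : IsAnswerSet (MinTest n P S) T) {i : ℕ} {r : Rule α}
    (hs : Lit.pos (TAtom.s i r) ∈ T) :
    i < n ∧ r ∈ P i ∧ Lit.pos (ExtAtom.rej i r) ∈ S := by
  obtain ⟨v, hvV, hnd, hhead, hprem⟩ := as_supported hT hs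
  rcases hvV with ((hl | hc2) | hc3) | hfin
  · obtain ⟨u, huU, rfl⟩ := hl
    cases hu : u.head with
    | none => simp [liftTRule, hu] at hhead
    | some l =>
      simp only [liftTRule, hu, Option.map_some] at hhead
      exact absurd (Option.some.inj hhead) liftT_ne_s
  · obtain ⟨i', hi', r', hr', rfl⟩ := hc2
    simp at hhead
  · obtain ⟨i', hi', r', hr', hrS, rfl | rfl⟩ := hc3
    · simp at hhead
    · obtain ⟨rfl, rfl⟩ : i' = i ∧ r' = r := by simpa using Option.some.inj hhead
      exact ⟨hi', hr', hrS⟩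
  · rw [Set.mem_singleton_iff] at hfin; subst hfin; simp at hhead

theorem orig_support (hT : IsAnswerSet (MinTest n P S) T) {l : Lit (ExtAtom α)}
    (hl : liftT l ∈ T) :
    ∃ u ∈ UpdProgram n P, ¬ Defeated T (liftTRule u) ∧ u.head = some l ∧
      liftT '' u.prem ⊆ T := by
  obtain ⟨v, hvV, hnd, hhead, hprem⟩ := as_supported hT hl
  rcases hvV with ((hlf | hc2) | hc3) | hfin
  · obtain ⟨u, huU, rfl⟩ := hlf
    cases hu : u.head with
    | none => simp [liftTRule, hu] at hhead
    | some l' =>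
      simp only [liftTRule, hu, Option.map_some] at hhead
      have := liftT_inj (Option.some.inj hhead)
      subst this
      exact ⟨u, huU, hnd, hu, hprem⟩
  · obtain ⟨i', hi', r', hr', rfl⟩ := hc2
    simp at hhead
  · obtain ⟨i', hi', r', hr', hrS, rfl | rfl⟩ := hc3
    · exact absurd (Option.some.inj hhead).symm liftT_ne_ok
    · exact absurd (Option.some.inj hhead).symm liftT_ne_s
  · rw [Set.mem_singleton_iff] at hfin; subst hfin; simp at hhead

end TTest
section DirA
variable {α : Type} {n : ℕ} {P : ℕ → Set (Rule α)} {S : Set (Lit (ExtAtom α))}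
variable {T : Set (Lit (TAtom α))}

theorem dirA_as (hT : IsAnswerSet (MinTest n P S) T) :
    IsAnswerSet (UpdProgram n P) {l | liftT l ∈ T} := by
  set X : Set (Lit (ExtAtom α)) := {l | liftT l ∈ T} with hXdef
  refine ⟨?_, ?_, ?_⟩
  · -- consistency
    intro a ⟨h1, h2⟩
    exact hT.1 (TAtom.orig a) ⟨h1, h2⟩
  · -- model of reduct
    rintro u' ⟨u, huU, hnd, rfl⟩ ⟨hprem, -⟩
    have hndT : ¬ Defeated T (liftTRule u) := fun h => hnd (defeated_liftT.1 h)
    have hred : Rule.mk (liftTRule u).head (liftTRule u).prem ∅ ∈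
        Reduct (MinTest n P S) T := ⟨liftTRule u, mem_V_lift huU, hndT, rfl⟩
    have hpT : (liftTRule u).prem ⊆ T := by
      rintro t ⟨p, hp, rfl⟩
      exact hprem hp
    have := hT.2.1 _ hred ⟨hpT, fun L hL => absurd hL (Set.notMem_empty L)⟩
    obtain ⟨t, ht, htT⟩ := this
    cases hu : u.head with
    | none => simp [liftTRule, hu] at ht
    | some l =>
      simp only [liftTRule, hu, Option.map_some] at ht
      cases Option.some.inj ht
      exact ⟨l, rfl, htT⟩
  · -- minimality
    intro Y hYX hYmod
    classical
    set O : Set (Lit (TAtom α)) := Set.range liftT with hO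
    set T' : Set (Lit (TAtom α)) := (T \ O) ∪ liftT '' Y with hT'
    have hsubT' : T' ⊆ T := by
      rintro t (⟨ht, -⟩ | ⟨y, hy, rfl⟩)
      · exact ht
      · exact hYX hy
    have hT'mod : IsModel T' (Reduct (MinTest n P S) T) := by
      rintro v' ⟨v, hvV, hnd, rfl⟩ ⟨hprem', -⟩
      rcases hvV with ((hl | hc2) | hc3) | hfin
      · obtain ⟨u, huU, rfl⟩ := hl
        have hpY : u.prem ⊆ Y := by
          intro p hp
          have : liftT p ∈ T' := hprem' ⟨p, hp, rfl⟩
          rcases this with ⟨-, hpo⟩ | ⟨y, hy, hyl⟩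
          · exact absurd liftT_mem_range hpo
          · cases liftT_inj hyl; exact hy
        have hndX : ¬ Defeated X u := fun h => hnd (defeated_liftT.2 h)
        have hredU : Rule.mk u.head u.prem ∅ ∈ Reduct (UpdProgram n P) X :=
          ⟨u, huU, hndX, rfl⟩
        obtain ⟨l, hl, hlY⟩ :=
          hYmod _ hredU ⟨hpY, fun L hL => absurd hL (Set.notMem_empty L)⟩
        refine ⟨liftT l, ?_, Or.inr ⟨l, hlY, rfl⟩⟩
        show (liftTRule u).head = some (liftT l)
        have hl' : u.head = some l := hl
        simp [liftTRule, hl']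
      · obtain ⟨i, hi, r, hr, rfl⟩ := hc2
        exfalso
        refine as_nohead hT (mem_V_c2 hi hr) hnd rfl ?_
        exact fun z hz => hsubT' (hprem' hz)
      · obtain ⟨i, hi, r, hr, hrS, rfl | rfl⟩ := hc3
        · exact ⟨Lit.pos TAtom.ok, rfl, Or.inl ⟨ok_mem hT, ok_not_range⟩⟩
        · refine ⟨Lit.pos (TAtom.s i r), rfl, Or.inl ⟨?_, s_not_range⟩⟩
          refine as_closure hT (mem_V_s hi hr hrS) ?_ (Set.empty_subset T) rfl
          rintro ⟨B, hB, -⟩; exact absurd hB (Set.notMem_empty B)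
      · rw [Set.mem_singleton_iff] at hfin; subst hfin
        exfalso
        exact hnd ⟨Lit.pos TAtom.ok, rfl, ok_mem hT⟩
    have hTT' : T' = T := hT.2.2 T' hsubT' hT'mod
    apply Set.Subset.antisymm hYX
    intro x hx
    have : liftT x ∈ T' := by rw [hTT']; exact hx
    rcases this with ⟨-, hxo⟩ | ⟨y, hy, hyl⟩
    · exact absurd liftT_mem_range hxo
    · cases liftT_inj hyl; exact hy

theorem dirA (hT : IsAnswerSet (MinTest n P S) T) (_hS : IsAnswerSet (UpdProgram n P) S) :
    ∃ X, IsAnswerSet (UpdProgram n P) X ∧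
      {p : ℕ × Rule α | Lit.pos (ExtAtom.rej p.1 p.2) ∈ X} ⊂
      {p : ℕ × Rule α | Lit.pos (ExtAtom.rej p.1 p.2) ∈ S} := by
  set X : Set (Lit (ExtAtom α)) := {l | liftT l ∈ T} with hXdef
  have hXas : IsAnswerSet (UpdProgram n P) X := dirA_as hT
  refine ⟨X, hXas, ?_⟩
  rw [Set.ssubset_def]
  constructor
  · rintro ⟨i, r⟩ hx
    have hx' : Lit.pos (ExtAtom.rej i r) ∈ X := hx
    obtain ⟨hin, hrP, -⟩ := (rej_mem_iff hXas).1 hx'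
    have hsT : Lit.pos (TAtom.s i r) ∈ T := by
      by_contra hs
      refine as_nohead hT (mem_V_c2 (by omega) hrP) ?_ rfl ?_
      · rintro ⟨B, hB, hBT⟩
        rw [Set.mem_singleton_iff] at hB; subst hB; exact hs hBT
      · intro z hz
        rw [Set.mem_singleton_iff] at hz; subst hz
        exact hx'
    exact (s_support hT hsT).2.2
  · intro hsup
    obtain ⟨i, hi, r, hr, hrS, hnotT⟩ := ok_support hT
    have : (i, r) ∈ {p : ℕ × Rule α | Lit.pos (ExtAtom.rej p.1 p.2) ∈ S} := hrS
    exact hnotT (hsup this)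

end DirA
section DirB
variable {α : Type} {n : ℕ} {P : ℕ → Set (Rule α)} {S X : Set (Lit (ExtAtom α))}

theorem dirB (hS : IsAnswerSet (UpdProgram n P) S) (hX : IsAnswerSet (UpdProgram n P) X)
    (hsub : {p : ℕ × Rule α | Lit.pos (ExtAtom.rej p.1 p.2) ∈ X} ⊆
            {p : ℕ × Rule α | Lit.pos (ExtAtom.rej p.1 p.2) ∈ S})
    (hw : ∃ i r, Lit.pos (ExtAtom.rej i r) ∈ S ∧ Lit.pos (ExtAtom.rej i r) ∉ X) :
    ∃ T, IsAnswerSet (MinTest n P S) T := by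
  classical
  set SP : Set (Lit (TAtom α)) :=
    {t | ∃ i r, i < n ∧ r ∈ P i ∧ Lit.pos (ExtAtom.rej i r) ∈ S ∧
      t = Lit.pos (TAtom.s i r)} with hSP
  set T : Set (Lit (TAtom α)) := liftT '' X ∪ SP ∪ {Lit.pos TAtom.ok} with hTdef
  have hokT : Lit.pos TAtom.ok ∈ T := Or.inr rfl
  have hmemlift : ∀ l : Lit (ExtAtom α), liftT l ∈ T ↔ l ∈ X := by
    intro l
    constructor
    · rintro ((⟨y, hy, hyl⟩ | hsp) | hok)
      · cases liftT_inj hyl; exact hy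
      · obtain ⟨i, r, -, -, -, heq⟩ := hsp
        exact absurd heq liftT_ne_s
      · rw [Set.mem_singleton_iff] at hok
        exact absurd hok liftT_ne_ok
    · intro hl; exact Or.inl (Or.inl ⟨l, hl, rfl⟩)
  have hXT : {l : Lit (ExtAtom α) | liftT l ∈ T} = X := Set.ext hmemlift
  have hmems : ∀ i (r : Rule α), Lit.pos (TAtom.s i r) ∈ T ↔
      (i < n ∧ r ∈ P i ∧ Lit.pos (ExtAtom.rej i r) ∈ S) := by
    intro i r
    constructor
    · rintro ((⟨y, -, hyl⟩ | hsp) | hok)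
      · exact absurd hyl liftT_ne_s
      · obtain ⟨i', r', h1, h2, h3, heq⟩ := hsp
        obtain ⟨rfl, rfl⟩ : i = i' ∧ r = r' := by simpa using heq
        exact ⟨h1, h2, h3⟩
      · rw [Set.mem_singleton_iff] at hok; simp at hok
    · rintro ⟨h1, h2, h3⟩; exact Or.inl (Or.inr ⟨i, r, h1, h2, h3, rfl⟩)
  refine ⟨T, ?_, ?_, ?_⟩
  · -- consistent
    intro a ⟨h1, h2⟩
    have hneg : ∀ b : TAtom α, Lit.neg b ∈ T → ∃ e, b = TAtom.orig e := by
      rintro b ((⟨y, -, hyl⟩ | hsp) | hok)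
      · cases y with
        | pos e => simp [liftT] at hyl
        | neg e => exact ⟨e, by simpa [liftT] using hyl.symm⟩
      · obtain ⟨i, r, -, -, -, heq⟩ := hsp; simp at heq
      · rw [Set.mem_singleton_iff] at hok; simp at hok
    obtain ⟨e, rfl⟩ := hneg a h2
    have h1' : liftT (Lit.pos e) ∈ T := h1
    have h2' : liftT (Lit.neg e) ∈ T := h2
    exact hX.1 e ⟨(hmemlift _).1 h1', (hmemlift _).1 h2'⟩
  · -- model of reduct
    rintro v' ⟨v, hvV, hnd, rfl⟩ ⟨hprem, -⟩
    rcases hvV with ((hl | hc2) | hc3) | hfin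
    · obtain ⟨u, huU, rfl⟩ := hl
      have hndX : ¬ Defeated X u := by
        intro h
        exact hnd (defeated_liftT.2 (by rwa [hXT]))
      have hpX : u.prem ⊆ X := by
        intro p hp
        exact (hmemlift p).1 (hprem ⟨p, hp, rfl⟩)
      cases hu : u.head with
      | none => exact absurd hpX (as_nohead hX huU hndX hu)
      | some l =>
        refine ⟨liftT l, ?_, (hmemlift l).2 (as_closure hX huU hndX hpX hu)⟩
        show (liftTRule u).head = some (liftT l)
        simp [liftTRule, hu]
    · obtain ⟨i, hi, r, hr, rfl⟩ := hc2
      exfalso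
      have hrejX : Lit.pos (ExtAtom.rej i r) ∈ X := by
        have := hprem (Set.mem_singleton _)
        exact (hmemlift (Lit.pos (ExtAtom.rej i r))).1 this
      have hrejS : Lit.pos (ExtAtom.rej i r) ∈ S := by
        have hp : (i, r) ∈ {p : ℕ × Rule α | Lit.pos (ExtAtom.rej p.1 p.2) ∈ X} := hrejX
        exact hsub hp
      have hsT : Lit.pos (TAtom.s i r) ∈ T := (hmems i r).2 ⟨hi, hr, hrejS⟩
      exact hnd ⟨_, Set.mem_singleton _, hsT⟩
    · obtain ⟨i, hi, r, hr, hrS, rfl | rfl⟩ := hc3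
      · exact ⟨Lit.pos TAtom.ok, rfl, hokT⟩
      · exact ⟨Lit.pos (TAtom.s i r), rfl, (hmems i r).2 ⟨hi, hr, hrS⟩⟩
    · rw [Set.mem_singleton_iff] at hfin; subst hfin
      exact absurd ⟨Lit.pos TAtom.ok, Set.mem_singleton _, hokT⟩ hnd
  · -- minimality
    intro T' hT'sub hT'mod
    obtain ⟨i₀, r₀, hw1, hw2⟩ := hw
    obtain ⟨hi₀n, hr₀P, -⟩ := (rej_mem_iff hS).1 hw1
    have hokT' : Lit.pos TAtom.ok ∈ T' := by
      have hvV := mem_V_ok (S := S) (by omega : i₀ < n) hr₀P hw1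
      have hnd : ¬ Defeated T (Rule.mk (some (Lit.pos TAtom.ok)) ∅
          {Lit.pos (TAtom.orig (ExtAtom.rej i₀ r₀))}) := by
        rintro ⟨B, hB, hBT⟩
        rw [Set.mem_singleton_iff] at hB; subst hB
        exact hw2 ((hmemlift _).1 hBT)
      obtain ⟨t, ht, htT'⟩ := hT'mod _ ⟨_, hvV, hnd, rfl⟩
        ⟨Set.empty_subset T', fun L hL => absurd hL (Set.notMem_empty L)⟩
      cases Option.some.inj ht
      exact htT'
    have hsT' : SP ⊆ T' := by
      rintro t ⟨i, r, h1, h2, h3, rfl⟩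
      have hvV := mem_V_s (S := S) h1 h2 h3
      have hnd : ¬ Defeated T (Rule.mk (some (Lit.pos (TAtom.s i r))) ∅ ∅) := by
        rintro ⟨B, hB, -⟩; exact absurd hB (Set.notMem_empty B)
      obtain ⟨t, ht, htT'⟩ := hT'mod _ ⟨_, hvV, hnd, rfl⟩
        ⟨Set.empty_subset T', fun L hL => absurd hL (Set.notMem_empty L)⟩
      cases Option.some.inj ht
      exact htT'
    have hY : {l : Lit (ExtAtom α) | liftT l ∈ T'} = X := by
      apply hX.2.2
      · intro l hl
        rw [← hXT]
        exact hT'sub hl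
      · rintro u' ⟨u, huU, hndX, rfl⟩ ⟨hpY, -⟩
        have hndT : ¬ Defeated T (liftTRule u) := by
          intro h
          apply hndX
          rw [← hXT]
          exact defeated_liftT.1 h
        have hpT' : liftT '' u.prem ⊆ T' := by
          rintro t ⟨p, hp, rfl⟩
          exact hpY hp
        obtain ⟨t, ht, htT'⟩ := hT'mod _ ⟨_, mem_V_lift huU, hndT, rfl⟩
          ⟨hpT', fun L hL => absurd hL (Set.notMem_empty L)⟩
        have ht' : (liftTRule u).head = some t := ht
        cases hu : u.head with
        | none => simp [liftTRule, hu] at ht'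
        | some l =>
          simp only [liftTRule, hu, Option.map_some] at ht'
          cases Option.some.inj ht'
          exact ⟨l, rfl, htT'⟩
    apply Set.Subset.antisymm hT'sub
    rintro t ((⟨y, hy, rfl⟩ | hsp) | hok)
    · rw [← hY] at hy
      exact hy
    · exact hsT' hsp
    · rw [Set.mem_singleton_iff] at hok; subst hok; exact hokT'

end DirB
/-- an answer set `S` of the update program is minimal iff the
minimality-test program `P⃗^{min}_S` has no answer set. -/
theorem minimal_iff_minTest_unsat {α : Type} (n : ℕ) (P : ℕ → Set (Rule α))
    (S : Set (Lit (ExtAtom α))) (hS : IsAnswerSet (UpdProgram n P) S) :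
    MinimalUAS n P { L | liftLit L ∈ S } ↔
      ¬ ∃ T : Set (Lit (TAtom α)), IsAnswerSet (MinTest n P S) T := by
  constructor
  · rintro ⟨-, hmin⟩ ⟨T, hT⟩
    obtain ⟨X, hXas, hstrict⟩ := dirA hT hS
    apply hmin {L | liftLit L ∈ X} ⟨X, hXas, rfl⟩
    exact (strict_iff hXas hS).2 hstrict
  · intro hno
    refine ⟨⟨S, hS, rfl⟩, ?_⟩
    rintro S' ⟨X, hXas, rfl⟩ hlt
    have hstrict := (strict_iff hXas hS).1 hlt
    rw [Set.ssubset_def] at hstrict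
    obtain ⟨hsub, hns⟩ := hstrict
    have hw : ∃ i r, Lit.pos (ExtAtom.rej i r) ∈ S ∧ Lit.pos (ExtAtom.rej i r) ∉ X := by
      by_contra h
      push_neg at h
      apply hns
      rintro ⟨i, r⟩ hp
      exact h i r hp
    exact hno (dirB hS hXas hsub hw)
end

section
/- For update sequences of length two, i.e., P⃗ = (P_1, P_2), the notions of minimal answer set and strictly minimal answer set coincide. -/
/-- `S'` is preferred over `S`: at some level `i`, `S'` rejects strictly
fewer rules, and at every later level the rejection sets coincide. -/
def Preferred {α : Type} (n : ℕ) (P : ℕ → Set (Rule α)) (S' S : Set (Lit α)) : Prop :=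
  ∃ i < n, RejLevel n P S' i ⊂ RejLevel n P S i ∧
    ∀ j, i < j → j < n → RejLevel n P S' j = RejLevel n P S j

/-- `S` is a strictly minimal update answer set: no update answer set is
preferred over it. -/
def StrictlyMinimalUAS {α : Type} (n : ℕ) (P : ℕ → Set (Rule α)) (S : Set (Lit α)) : Prop :=
  UpdateAnswerSet n P S ∧
    ∀ S', UpdateAnswerSet n P S' → ¬ Preferred n P S' S

lemma rejLevel_one_empty {α : Type} (P : ℕ → Set (Rule α)) (S : Set (Lit α)) :
    RejLevel 2 P S 1 = ∅ := by
  ext r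
  rw [RejLevel]
  simp only [Set.mem_empty_iff_false, iff_false, Set.mem_setOf_eq]
  rintro ⟨_, j, hj, hj2, _⟩
  omega

lemma rej_eq_rejLevel_zero {α : Type} (P : ℕ → Set (Rule α)) (S : Set (Lit α)) :
    Rej 2 P S = RejLevel 2 P S 0 := by
  ext r
  constructor
  · rintro ⟨i, hi, hr⟩
    interval_cases i
    · exact hr
    · rw [rejLevel_one_empty] at hr; exact hr.elim
  · intro hr; exact ⟨0, by omega, hr⟩

lemma preferred_iff {α : Type} (P : ℕ → Set (Rule α)) (S' S : Set (Lit α)) :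
    Preferred 2 P S' S ↔ Rej 2 P S' ⊂ Rej 2 P S := by
  rw [rej_eq_rejLevel_zero, rej_eq_rejLevel_zero]
  constructor
  · rintro ⟨i, hi, hsub, _⟩
    interval_cases i
    · exact hsub
    · rw [rejLevel_one_empty, rejLevel_one_empty] at hsub
      exact absurd hsub (by simp)
  · intro h
    refine ⟨0, by omega, h, ?_⟩
    intro j hj hj2
    interval_cases j
    rw [rejLevel_one_empty, rejLevel_one_empty]

/-- for sequences of length two, minimal and strictly minimal
answer sets coincide. -/
theorem minimal_iff_strictlyMinimal_len2 {α : Type} (P : ℕ → Set (Rule α))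
    (S : Set (Lit α)) (hS : UpdateAnswerSet 2 P S) :
    MinimalUAS 2 P S ↔ StrictlyMinimalUAS 2 P S := by
  constructor
  · rintro ⟨h1, h2⟩
    exact ⟨h1, fun S' hS' hp => h2 S' hS' ((preferred_iff P S' S).mp hp)⟩
  · rintro ⟨h1, h2⟩
    exact ⟨h1, fun S' hS' hp => h2 S' hS' ((preferred_iff P S' S).mpr hp)⟩
end
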